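/- arXiv:1910.14527 — 2 statements merged into one kernel-verified Lean document; each statement's English description precedes it below -/
import Mathlib

section
/- Let d be a positive integer. A set X ⊆ ℝ^d is microscopic if and only if there is a microscopic set E ⊆ ℝ such that X ⊆ E^⋈d, where E^⋈d = {x ∈ ℝ^d : at least one coordinate of x lies in E}. -/
/-!
A box of volume at most `c ^ d` has a side of length at most `c`. Covering a microscopic `X` at
the scales `(2 ^ (-2 ^ (t + 1))) ^ d` and keeping a shortest side of every box gives intervals
`J t n` of length at most `2 ^ (-2 ^ (t + 1) * (n + 1))`; the reals lying in `⋃ n, J t n` for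
infinitely many `t` form a microscopic set `E`, and by pigeonhole every point of `X` has a
coordinate in `E`. Conversely, `E^⋈d` is the countable union of the slabs
`{x | x i ∈ E} ∩ closedBall 0 R`, each microscopic by thickening an interval cover of `E`, and
microscopic sets are closed under countable unions because `(p, n) ↦ 2 ^ p * (2 * n + 1)`
enumerates `ℕ × ℕ` so that `(p, n)` receives an index at most `2 ^ (p + 1) * (n + 1)`.
-/

open Filter Set Topology MeasureTheory
open scoped ENNReal NNReal

noncomputable section

/-- A gauge: nondecreasing on `[0,∞)`, right-continuous, `φ 0 = 0`, positive on `(0,∞)`. -/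
def IsGauge (φ : ℝ → ℝ) : Prop :=
  (∀ ⦃a b : ℝ⦄, 0 ≤ a → a ≤ b → φ a ≤ φ b) ∧
  (∀ a : ℝ, 0 ≤ a → ContinuousWithinAt φ (Set.Ici a) a) ∧
  φ 0 = 0 ∧ (∀ r : ℝ, 0 < r → 0 < φ r)

/-- `N_δ(E)`: the least number of sets of diameter at most `δ` needed to cover `E`. -/
def coverNum {X : Type*} [PseudoMetricSpace X] (δ : ℝ) (E : Set X) : ℝ≥0∞ :=
  ⨅ (n : ℕ) (_ : ∃ F : Fin n → Set X,
    (∀ i, EMetric.diam (F i) ≤ ENNReal.ofReal δ) ∧ E ⊆ ⋃ i, F i), (n : ℝ≥0∞)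

/-- `ν_0^ζ(E) = liminf_{δ→0+} N_δ(E)·ζ(δ)`. -/
def nu0 {X : Type*} [PseudoMetricSpace X] (ζ : ℝ → ℝ) (E : Set X) : ℝ≥0∞ :=
  Filter.liminf (fun δ : ℝ => coverNum δ E * ENNReal.ofReal (ζ δ)) (𝓝[>] (0:ℝ))

/-- The lower box-counting measure `ν^ζ`. -/
def lowerBoxMeasure {X : Type*} [PseudoMetricSpace X] (ζ : ℝ → ℝ) (E : Set X) : ℝ≥0∞ :=
  ⨅ (G : ℕ → Set X) (_ : E ⊆ ⋃ n, G n), ∑' n, nu0 ζ (G n)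

/-- The lower box dimension `lbdim E = liminf_{r→0+} log N_r(E)/|log r|`. -/
def lbdim {X : Type*} [PseudoMetricSpace X] (E : Set X) : EReal :=
  Filter.liminf (fun r : ℝ => ENNReal.log (coverNum r E) * ((|Real.log r|⁻¹ : ℝ) : EReal))
    (𝓝[>] (0:ℝ))

/-- The lower packing dimension. -/
def lpdim {X : Type*} [PseudoMetricSpace X] (E : Set X) : EReal :=
  ⨅ (G : ℕ → Set X) (_ : E ⊆ ⋃ n, G n), ⨆ n, lbdim (G n)

/-- The generalized lower scaled oscillation `lip_φ f`. -/
def lipGauge {X : Type*} [PseudoMetricSpace X] (φ : ℝ → ℝ) (f : X → ℝ) (x : X) : ℝ≥0∞ :=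
  Filter.liminf
    (fun r : ℝ => EMetric.diam (f '' Metric.closedBall x r) / ENNReal.ofReal (φ r))
    (𝓝[>] (0:ℝ))

/-- The upper scaled oscillation `Lip f`. -/
def LipGauge {X : Type*} [PseudoMetricSpace X] (φ : ℝ → ℝ) (f : X → ℝ) (x : X) : ℝ≥0∞ :=
  Filter.limsup
    (fun r : ℝ => EMetric.diam (f '' Metric.closedBall x r) / ENNReal.ofReal (φ r))
    (𝓝[>] (0:ℝ))

/-- The Hausdorff measure with gauge `ξ`. -/
def hausdorffGauge {X : Type*} [PseudoMetricSpace X] (ξ : ℝ → ℝ) (E : Set X) : ℝ≥0∞ :=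
  ⨆ (δ : ℝ) (_ : 0 < δ), ⨅ (G : ℕ → Set X) (_ : E ⊆ ⋃ n, G n)
    (_ : ∀ n, EMetric.diam (G n) ≤ ENNReal.ofReal δ),
    ∑' n, ENNReal.ofReal (ξ (EMetric.diam (G n)).toReal)

/-- A box in `ℝ^k`. -/
def IsBox {k : ℕ} (S : Set (EuclideanSpace ℝ (Fin k))) : Prop :=
  ∃ a b : Fin k → ℝ, S = {x | ∀ i, x i ∈ Set.Icc (a i) (b i)}

/-- A microscopic subset of `ℝ^k`. -/
def Microscopic {k : ℕ} (X : Set (EuclideanSpace ℝ (Fin k))) : Prop :=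
  ∀ ε : ℝ, 0 < ε → ∃ B : ℕ → Set (EuclideanSpace ℝ (Fin k)),
    (∀ n, IsBox (B n)) ∧ X ⊆ ⋃ n, B n ∧
    ∀ n, MeasureTheory.volume (B n) ≤ ENNReal.ofReal (ε ^ (n + 1))

/-- A microscopic subset of `ℝ`. -/
def MicroscopicR (E : Set ℝ) : Prop :=
  ∀ ε : ℝ, 0 < ε → ∃ I : ℕ → ℝ × ℝ,
    E ⊆ ⋃ n, Set.Icc (I n).1 (I n).2 ∧
    ∀ n, MeasureTheory.volume (Set.Icc (I n).1 (I n).2) ≤ ENNReal.ofReal (ε ^ (n + 1))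

end

open Function

/-- The inverse of `(p, n) ↦ 2 ^ p * (2 * n + 1) - 1`. -/
def dyadicDecode (m : ℕ) : ℕ × ℕ :=
  (padicValNat 2 (m + 1), (m + 1) / 2 ^ (padicValNat 2 (m + 1) + 1))

lemma succ_le_dyadicDecode (m : ℕ) :
    m + 1 ≤ 2 ^ ((dyadicDecode m).1 + 1) * ((dyadicDecode m).2 + 1) :=
  (Nat.lt_mul_div_succ (m + 1) (by positivity)).le

lemma dyadicDecode_surjective : Surjective dyadicDecode := by
  rintro ⟨p, n⟩
  have hodd : padicValNat 2 (2 * n + 1) = 0 :=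
    padicValNat.eq_zero_of_not_dvd (by omega)
  have hval : padicValNat 2 (2 ^ p * (2 * n + 1)) = p := by
    rw [padicValNat.mul (by positivity) (by omega), padicValNat.prime_pow, hodd, add_zero]
  refine ⟨2 ^ p * (2 * n + 1) - 1, ?_⟩
  have hpos : 0 < 2 ^ p * (2 * n + 1) := by positivity
  simp only [dyadicDecode, Nat.sub_add_cancel hpos, hval, Prod.mk.injEq, true_and]
  rw [pow_succ, Nat.mul_div_mul_left _ _ (by positivity)]
  omega

def euclideanBox {ι : Type*} (a b : ι → ℝ) : Set (EuclideanSpace ℝ ι) :=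
  {x | ∀ i, x i ∈ Icc (a i) (b i)}

lemma volume_euclideanBox {ι : Type*} [Fintype ι] (a b : ι → ℝ) :
    volume (euclideanBox a b) = ∏ i, ENNReal.ofReal (b i - a i) := by
  have : euclideanBox a b = WithLp.ofLp ⁻¹' Icc a b := by
    ext x; simp [euclideanBox, Pi.le_def, forall_and]
  rw [this, (PiLp.volume_preserving_ofLp ι).measure_preimage measurableSet_Icc.nullMeasurableSet,
    Real.volume_Icc_pi]

lemma exists_sub_le_of_volume_euclideanBox_le {ι : Type*} [Fintype ι] [Nonempty ι]
    {a b : ι → ℝ} {c : ℝ} (hc : 0 < c)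
    (h : volume (euclideanBox a b) ≤ ENNReal.ofReal (c ^ Fintype.card ι)) :
    ∃ i, b i - a i ≤ c := by
  by_contra! hlt
  have hprod : c ^ Fintype.card ι < ∏ i, (b i - a i) := by
    simpa using
      Finset.prod_lt_prod_of_nonempty (fun i _ => hc) (fun i _ => hlt i) Finset.univ_nonempty
  rw [volume_euclideanBox, ← ENNReal.ofReal_prod_of_nonneg (fun i _ => (hc.trans (hlt i)).le),
    ENNReal.ofReal_le_ofReal_iff (by positivity)] at h
  exact hprod.not_ge h

/-- The cross power `E^⋈k`. -/
def crossPower (E : Set ℝ) (k : ℕ) : Set (EuclideanSpace ℝ (Fin k)) :=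
  {x | ∃ i, x i ∈ E}

section Microscopic

variable {k : ℕ}

lemma Microscopic.mono {X Y : Set (EuclideanSpace ℝ (Fin k))} (hY : Microscopic Y)
    (hXY : X ⊆ Y) : Microscopic X := fun ε hε =>
  let ⟨B, hB, hYB, hvol⟩ := hY ε hε
  ⟨B, hB, hXY.trans hYB, hvol⟩

lemma Microscopic.iUnion_nat {X : ℕ → Set (EuclideanSpace ℝ (Fin k))}
    (hX : ∀ p, Microscopic (X p)) : Microscopic (⋃ p, X p) := by
  intro ε hε
  set δ := min ε 1
  have hδ : 0 < δ := lt_min hε one_pos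
  choose B hB hXB hvol using fun p => hX p (δ ^ 2 ^ (p + 1)) (by positivity)
  refine ⟨fun m => B (dyadicDecode m).1 (dyadicDecode m).2, fun m => hB _ _, ?_, fun m => ?_⟩
  · intro x hx
    obtain ⟨p, hxp⟩ := mem_iUnion.mp hx
    obtain ⟨n, hxn⟩ := mem_iUnion.mp (hXB p hxp)
    obtain ⟨m, hm⟩ := dyadicDecode_surjective (p, n)
    exact mem_iUnion.mpr ⟨m, by rwa [hm]⟩
  · refine (hvol _ _).trans (ENNReal.ofReal_le_ofReal ?_)
    calc (δ ^ 2 ^ ((dyadicDecode m).1 + 1)) ^ ((dyadicDecode m).2 + 1)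
        ≤ δ ^ (m + 1) := by
          rw [← pow_mul]
          exact pow_le_pow_of_le_one hδ.le (min_le_right _ _) (succ_le_dyadicDecode m)
      _ ≤ ε ^ (m + 1) := pow_le_pow_left₀ hδ.le (min_le_left _ _) _

lemma Microscopic.iUnion {ι : Type*} [Countable ι] [Nonempty ι]
    {X : ι → Set (EuclideanSpace ℝ (Fin k))} (hX : ∀ i, Microscopic (X i)) :
    Microscopic (⋃ i, X i) := by
  obtain ⟨f, hf⟩ := exists_surjective_nat ι
  rw [← hf.iUnion_comp]
  exact Microscopic.iUnion_nat fun p => hX (f p)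

end Microscopic

lemma MicroscopicR.microscopic_inter_closedBall {E : Set ℝ} (hE : MicroscopicR E) {k : ℕ}
    (i : Fin k) (R : ℕ) : Microscopic ({x : EuclideanSpace ℝ (Fin k) | x i ∈ E} ∩
      Metric.closedBall 0 R) := by
  intro ε hε
  set C : ℝ := max 1 ((2 * R) ^ (k - 1))
  have hC : 1 ≤ C := le_max_left _ _
  obtain ⟨I, hEI, hIvol⟩ := hE (ε / C) (by positivity)
  set a : ℕ → Fin k → ℝ := fun n => update (fun _ => -R) i (I n).1
  set b : ℕ → Fin k → ℝ := fun n => update (fun _ => R) i (I n).2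
  refine ⟨fun n => euclideanBox (a n) (b n), fun n => ⟨_, _, rfl⟩, ?_, fun n => ?_⟩
  · rintro x ⟨hxE, hxR⟩
    obtain ⟨n, hn⟩ := mem_iUnion.mp (hEI hxE)
    refine mem_iUnion.mpr ⟨n, fun j => ?_⟩
    rcases eq_or_ne j i with rfl | hji
    · simpa [a, b] using hn
    · have hxj : |x j| ≤ R := by
        simpa using (PiLp.norm_apply_le x j).trans (mem_closedBall_zero_iff.mp hxR)
      simpa [a, b, hji, abs_le] using hxj
  · have hlen : ENNReal.ofReal ((I n).2 - (I n).1) ≤ ENNReal.ofReal ((ε / C) ^ (n + 1)) := by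
      simpa [Real.volume_Icc] using hIvol n
    have hshrink : (ε / C) ^ (n + 1) * C ≤ ε ^ (n + 1) :=
      calc (ε / C) ^ (n + 1) * C = (ε / C) ^ n * ε := by
            rw [pow_succ, mul_assoc, div_mul_cancel₀ _ (by positivity)]
        _ ≤ ε ^ n * ε := by gcongr; exact div_le_self hε.le hC
        _ = ε ^ (n + 1) := (pow_succ _ _).symm
    calc volume (euclideanBox (a n) (b n))
        = ∏ j, ENNReal.ofReal (update (fun _ => 2 * (R : ℝ)) i ((I n).2 - (I n).1) j) := by
          rw [volume_euclideanBox]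
          congr! 2 with j
          rcases eq_or_ne j i with rfl | hji
          · simp [a, b]
          · simp only [a, b, update_of_ne hji]
            ring
      _ = ENNReal.ofReal ((I n).2 - (I n).1) * ENNReal.ofReal (2 * R) ^ (k - 1) := by
          rw [Fintype.prod_eq_mul_prod_compl i, update_self,
            Finset.prod_congr rfl fun j hj => by rw [update_of_ne (by simpa using hj)]]
          simp [Finset.card_compl]
      _ ≤ ENNReal.ofReal ((ε / C) ^ (n + 1)) * ENNReal.ofReal C := by
          rw [← ENNReal.ofReal_pow (by positivity)]
          gcongr
          exact le_max_right _ _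
      _ ≤ ENNReal.ofReal (ε ^ (n + 1)) := by
          rw [← ENNReal.ofReal_mul (by positivity)]
          exact ENNReal.ofReal_le_ofReal hshrink

lemma MicroscopicR.microscopic_crossPower {E : Set ℝ} (hE : MicroscopicR E) {k : ℕ}
    (hk : 0 < k) : Microscopic (crossPower E k) := by
  have : Nonempty (Fin k) := ⟨⟨0, hk⟩⟩
  refine (Microscopic.iUnion fun iR : Fin k × ℕ =>
    hE.microscopic_inter_closedBall iR.1 iR.2).mono ?_
  rintro x ⟨i, hi⟩
  exact mem_iUnion.mpr ⟨(i, ⌈‖x‖⌉₊), hi, mem_closedBall_zero_iff.mpr (Nat.le_ceil _)⟩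

lemma microscopicR_setOf_frequently_mem {q : ℝ} (hq0 : 0 ≤ q) (hq1 : q < 1)
    (I : ℕ → ℕ → ℝ × ℝ) (hI : ∀ t n, (I t n).2 - (I t n).1 ≤ q ^ (2 ^ (t + 1) * (n + 1))) :
    MicroscopicR {y | ∃ᶠ t in atTop, y ∈ ⋃ n, Icc (I t n).1 (I t n).2} := by
  intro ε hε
  obtain ⟨s, hs⟩ := exists_pow_lt_of_lt_one hε hq1
  set δ := q ^ 2 ^ s
  have hδε : δ ≤ ε := (pow_le_pow_of_le_one hq0 hq1.le Nat.lt_two_pow_self.le).trans hs.le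
  refine ⟨fun m => I (s + (dyadicDecode m).1) (dyadicDecode m).2, ?_, fun m => ?_⟩
  · intro y hy
    obtain ⟨t, hst, hyt⟩ := frequently_atTop.mp hy s
    obtain ⟨n, hn⟩ := mem_iUnion.mp hyt
    obtain ⟨m, hm⟩ := dyadicDecode_surjective (t - s, n)
    refine mem_iUnion.mpr ⟨m, ?_⟩
    simpa only [hm, Nat.add_sub_cancel' hst] using hn
  · rw [Real.volume_Icc]
    refine ENNReal.ofReal_le_ofReal ?_
    calc _ ≤ q ^ (2 ^ (s + (dyadicDecode m).1 + 1) * ((dyadicDecode m).2 + 1)) :=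
          hI _ _
      _ = δ ^ (2 ^ ((dyadicDecode m).1 + 1) * ((dyadicDecode m).2 + 1)) := by
          rw [← pow_mul]; ring_nf
      _ ≤ δ ^ (m + 1) :=
          pow_le_pow_of_le_one (by positivity) (pow_le_one₀ hq0 hq1.le) (succ_le_dyadicDecode m)
      _ ≤ ε ^ (m + 1) := pow_le_pow_left₀ (by positivity) hδε _

lemma Microscopic.exists_microscopicR_subset_crossPower {k : ℕ} (hk : 0 < k)
    {X : Set (EuclideanSpace ℝ (Fin k))} (hX : Microscopic X) :
    ∃ E, MicroscopicR E ∧ X ⊆ crossPower E k := by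
  have : Nonempty (Fin k) := ⟨⟨0, hk⟩⟩
  set q : ℝ := 1 / 2
  choose B hB hXB hvol using fun t : ℕ => hX ((q ^ 2 ^ (t + 1)) ^ k) (by positivity)
  choose a b hab using hB
  have hside : ∀ t n, ∃ i, b t n i - a t n i ≤ q ^ (2 ^ (t + 1) * (n + 1)) := by
    intro t n
    refine exists_sub_le_of_volume_euclideanBox_le (by positivity) ?_
    have hexp : ((q ^ 2 ^ (t + 1)) ^ k) ^ (n + 1) =
        (q ^ (2 ^ (t + 1) * (n + 1))) ^ Fintype.card (Fin k) := by
      rw [Fintype.card_fin]; ring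
    rw [← hexp, euclideanBox, ← hab]
    exact hvol t n
  choose idx hidx using hside
  refine ⟨_, microscopicR_setOf_frequently_mem (q := q) (by norm_num) (by norm_num)
    (fun t n => (a t n (idx t n), b t n (idx t n))) hidx, ?_⟩
  intro x hx
  choose n hn using fun t => mem_iUnion.mp (hXB t hx)
  obtain ⟨i, hi⟩ : ∃ i, ∃ᶠ t in atTop, idx t (n t) = i :=
    frequently_exists.mp (Frequently.of_forall fun t => ⟨_, rfl⟩)
  refine ⟨i, hi.mono fun t hti => mem_iUnion.mpr ⟨n t, ?_⟩⟩
  have hxt := hab t (n t) ▸ hn t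
  exact hti ▸ hxt (idx t (n t))

theorem stmt13
    (d : ℕ) (hd : 0 < d) (X : Set (EuclideanSpace ℝ (Fin d))) :
    Microscopic X ↔
      ∃ E : Set ℝ, MicroscopicR E ∧ X ⊆ {x : EuclideanSpace ℝ (Fin d) | ∃ i, x i ∈ E} :=
  ⟨fun hX => hX.exists_microscopicR_subset_crossPower hd,
    fun ⟨_, hE, hXE⟩ => (hE.microscopic_crossPower hd).mono hXE⟩
end

section
/- Let d be a positive integer and let Ω ⊆ ℝ^d be a locally compact set. Then for a typical function f ∈ C(Ω), the graph of f, {(x, f(x)) : x ∈ Ω} ⊆ ℝ^{d+1}, is microscopic in ℝ^{d+1}. -/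
open Filter Set Topology MeasureTheory
open scoped ENNReal NNReal

/-!
Exhaust `Ω` by compact sets `K m`. For fixed `K` and a fixed sequence of volume bounds, the
functions for which a whole `ρ`-neighbourhood of the graph over `K` is covered by boxes obeying
those bounds form an open set, and it is dense: given `f`, extend it continuously to `G` on
`ℝ^d` and replace it by `G ∘ R`, where `R` rounds every coordinate down to a grid of mesh `δ`
except on thin slabs where it climbs continuously to the next grid point. Over the plateaus
the graph takes finitely many values and is covered by flat boxes; over the slabs it is covered
by thin boxes. The number of boxes depends only on `δ`, so their volumes can then be made as
small as desired. Intersecting over all `K m` and all bounds `(1/(j+1))^(⟨m,n⟩+1)` gives a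
residual set, and for its members the covers of the pieces assemble into one microscopic cover.
-/

theorem ContinuousMap.hasBasis_nhds_dist {α β : Type*} [TopologicalSpace α]
    [PseudoMetricSpace β] (f : C(α, β)) :
    (𝓝 f).HasBasis (fun p : Set α × ℝ => IsCompact p.1 ∧ 0 < p.2)
      fun p => {g | ∀ x ∈ p.1, dist (f x) (g x) < p.2} :=
  nhds_basis_uniformity' Metric.uniformity_basis_dist.compactConvergenceUniformity

theorem isOpen_setOf_thickening_subset {α : Type*} [TopologicalSpace α] {K : Set α}
    (hK : IsCompact K) (S : α → ℝ → Prop) :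
    IsOpen {f : C(α, ℝ) | ∃ ρ > 0, ∀ x ∈ K, ∀ y, |y - f x| ≤ ρ → S x y} := by
  refine isOpen_iff_mem_nhds.2 fun f ⟨ρ, hρ, hS⟩ => ?_
  refine mem_of_superset (f.hasBasis_nhds_dist.mem_of_mem (i := (K, ρ / 2)) ⟨hK, half_pos hρ⟩)
    fun g hg => ⟨ρ / 2, half_pos hρ, fun x hx y hy => hS x hx y ?_⟩
  have hfg : |g x - f x| < ρ / 2 := by rw [abs_sub_comm, ← Real.dist_eq]; exact hg x hx
  linarith [abs_sub_le y (g x) (f x)]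

theorem IsCompact.exists_continuousMap_extension {α β : Type*} [TopologicalSpace α]
    [TopologicalSpace β] [T2Space β] [NormalSpace β] {e : α → β} (he : Continuous e)
    {K : Set α} (hK : IsCompact K) (he_inj : InjOn e K) (f : C(α, ℝ)) :
    ∃ G : C(β, ℝ), ∀ x ∈ K, G (e x) = f x := by
  have : CompactSpace K := isCompact_iff_compactSpace.1 hK
  have hcl : IsClosedEmbedding fun x : K => e x :=
    (he.comp continuous_subtype_val).isClosedEmbedding he_inj.injective
  obtain ⟨G, hG⟩ := (f.restrict K).exists_extension' hcl
  exact ⟨G, fun x hx => congr_fun hG ⟨x, hx⟩⟩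

theorem exists_pos_le_one_mul_le {C τ : ℝ} (hC : 0 ≤ C) (hτ : 0 < τ) :
    ∃ x : ℝ, 0 < x ∧ x ≤ 1 ∧ x * C ≤ τ := by
  obtain ⟨c, hc, hcC⟩ := exists_pos_mul_lt hτ C
  refine ⟨min c 1, lt_min hc one_pos, min_le_right _ _, ?_⟩
  calc min c 1 * C ≤ c * C := mul_le_mul_of_nonneg_right (min_le_left _ _) hC
    _ ≤ τ := by linarith

section Boxes

variable {d : ℕ}

theorem volume_euclidean_box {k : ℕ} (a b : Fin k → ℝ) :
    volume {x : EuclideanSpace ℝ (Fin k) | ∀ i, x i ∈ Icc (a i) (b i)}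
      = ∏ i, ENNReal.ofReal (b i - a i) := by
  have h : {x : EuclideanSpace ℝ (Fin k) | ∀ i, x i ∈ Icc (a i) (b i)}
      = WithLp.ofLp ⁻¹' Icc a b := by
    ext x; simp [Pi.le_def, forall_and]
  rw [h, (PiLp.volume_preserving_ofLp (Fin k)).measure_preimage
    measurableSet_Icc.nullMeasurableSet, Real.volume_Icc_pi]

def prodBox (a b : Fin d → ℝ) (c e : ℝ) : Set (EuclideanSpace ℝ (Fin (d + 1))) :=
  {z | ∀ i, z i ∈ Icc ((Fin.snoc a c : Fin (d + 1) → ℝ) i)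
    ((Fin.snoc b e : Fin (d + 1) → ℝ) i)}

theorem isBox_prodBox (a b : Fin d → ℝ) (c e : ℝ) : IsBox (prodBox a b c e) :=
  ⟨_, _, rfl⟩

theorem toLp_snoc_mem_prodBox {a b v : Fin d → ℝ} {c e y : ℝ} :
    WithLp.toLp 2 (Fin.snoc v y : Fin (d + 1) → ℝ) ∈ prodBox a b c e ↔
      (∀ i, v i ∈ Icc (a i) (b i)) ∧ y ∈ Icc c e := by
  simp [prodBox, Fin.forall_fin_succ']

theorem volume_prodBox {a b : Fin d → ℝ} {c e : ℝ} (hab : ∀ i, a i ≤ b i) :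
    volume (prodBox a b c e) = ENNReal.ofReal ((∏ i, (b i - a i)) * (e - c)) := by
  rw [prodBox, volume_euclidean_box, Fin.prod_univ_castSucc]
  simp only [Fin.snoc_castSucc, Fin.snoc_last]
  rw [ENNReal.ofReal_mul (Finset.prod_nonneg fun i _ => sub_nonneg.2 (hab i)),
    ENNReal.ofReal_prod_of_nonneg fun i _ => sub_nonneg.2 (hab i)]

theorem volume_prodBox_cube {L : ℝ} (hL : 0 ≤ L) (c e : ℝ) :
    volume (prodBox (fun _ : Fin d => -L) (fun _ => L) c e)
      = ENNReal.ofReal ((2 * L) ^ d * (e - c)) := by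
  rw [volume_prodBox (fun _ => by linarith)]
  simp [two_mul]

theorem volume_prodBox_slab {L : ℝ} (hL : 0 ≤ L) {w : ℝ} (hw : 0 ≤ w) (i : Fin d)
    (s c e : ℝ) :
    volume (prodBox (Function.update (fun _ : Fin d => -L) i (s - w))
      (Function.update (fun _ => L) i s) c e) =
        ENNReal.ofReal (w * (2 * L) ^ (d - 1) * (e - c)) := by
  have hsub : (fun j => Function.update (fun _ => L) i s j -
      Function.update (fun _ : Fin d => -L) i (s - w) j) =
        Function.update (fun _ => 2 * L) i w := by
    ext j
    rcases eq_or_ne j i with rfl | hj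
    · simp
    · simp [Function.update_of_ne hj]; ring
  rw [volume_prodBox (fun j => ?_), hsub, Finset.prod_update_of_mem (Finset.mem_univ i),
    Finset.prod_const, Finset.card_sdiff, Finset.card_univ, Fintype.card_fin]
  · simp
  · rw [← sub_nonneg, congr_fun hsub j]
    rcases eq_or_ne j i with rfl | hj
    · simpa using hw
    · simp [Function.update_of_ne hj]; linarith

end Boxes

noncomputable section Staircase

def stairProfile (a u : ℝ) : ℝ := u - max 0 ((u - (1 - a)) / a)

/-- On each cell `[k δ, (k + 1) δ)` this equals `k δ`, except on the last fraction `a` of the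
cell, where it rises linearly to `(k + 1) δ`. -/
def stair (δ a t : ℝ) : ℝ := t - δ * stairProfile a (Int.fract (t / δ))

theorem continuous_stair {δ a : ℝ} (ha : 0 < a) (ha1 : a ≤ 1) : Continuous (stair δ a) := by
  have h0 : stairProfile a 0 = 0 := by
    have : (a - 1) / a ≤ 0 := div_nonpos_of_nonpos_of_nonneg (by linarith) ha.le
    simp [stairProfile, this]
  have h1 : stairProfile a 1 = 0 := by simp [stairProfile, ha.ne']
  have hprofile : Continuous (stairProfile a ∘ Int.fract) :=
    ContinuousOn.comp_fract'' (by unfold stairProfile; fun_prop) (h0.trans h1.symm)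
  unfold stair
  exact continuous_id.sub (continuous_const.mul (hprofile.comp (continuous_id.div_const δ)))

theorem abs_stair_sub_le {δ a : ℝ} (hδ : 0 ≤ δ) (ha : 0 < a) (t : ℝ) :
    |stair δ a t - t| ≤ δ := by
  set u := Int.fract (t / δ)
  have hu0 : 0 ≤ u := Int.fract_nonneg _
  have hu1 : u < 1 := Int.fract_lt_one _
  have hjump : max 0 ((u - (1 - a)) / a) < 1 :=
    max_lt one_pos ((div_lt_one ha).2 (by linarith))
  have hprofile : |stairProfile a u| ≤ 1 := by
    unfold stairProfile
    rw [abs_le]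
    constructor <;> linarith [le_max_left 0 ((u - (1 - a)) / a)]
  rw [stair, sub_sub_cancel_left, abs_neg, abs_mul, abs_of_nonneg hδ]
  exact mul_le_of_le_one_right hδ hprofile

theorem stair_eq_of_fract_le {δ a t : ℝ} (hδ : δ ≠ 0) (ha : 0 ≤ a)
    (h : Int.fract (t / δ) ≤ 1 - a) : stair δ a t = δ * ⌊t / δ⌋ := by
  have : (Int.fract (t / δ) - (1 - a)) / a ≤ 0 := div_nonpos_of_nonpos_of_nonneg (by linarith) ha
  rw [stair, stairProfile, max_eq_left this, sub_zero, Int.fract]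
  field_simp
  ring

theorem mem_Icc_of_one_sub_lt_fract {δ a t : ℝ} (hδ : 0 < δ) (h : 1 - a < Int.fract (t / δ)) :
    t ∈ Icc ((⌊t / δ⌋ + 1 : ℤ) * δ - a * δ) ((⌊t / δ⌋ + 1 : ℤ) * δ) := by
  have hfloor := Int.lt_floor_add_one (t / δ)
  rw [Int.fract] at h
  have ht : t / δ * δ = t := div_mul_cancel₀ _ hδ.ne'
  push_cast
  constructor
  · nlinarith [mul_lt_mul_of_pos_right h hδ]
  · nlinarith [mul_lt_mul_of_pos_right hfloor hδ]

theorem floor_div_mem_Icc {δ L t : ℝ} {n : ℕ} (hδ : 0 < δ) (ht : |t| ≤ L)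
    (hn : L / δ + 1 ≤ n) :
    -(n : ℤ) ≤ ⌊t / δ⌋ ∧ ⌊t / δ⌋ + 1 ≤ n := by
  have htδ : |t / δ| ≤ L / δ := by
    rw [abs_div, abs_of_pos hδ]; exact div_le_div_of_nonneg_right ht hδ.le
  obtain ⟨hlo, hhi⟩ := abs_le.1 htδ
  constructor
  · rw [Int.le_floor]; push_cast; linarith
  · have := Int.floor_le (t / δ)
    have : (⌊t / δ⌋ : ℝ) + 1 ≤ n := by linarith
    exact_mod_cast this

end Staircase

noncomputable section StaircaseApprox

variable {d : ℕ}

def stairMap (δ a : ℝ) (v : Fin d → ℝ) : Fin d → ℝ := fun i => stair δ a (v i)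

theorem continuous_stairMap {δ a : ℝ} (ha : 0 < a) (ha1 : a ≤ 1) :
    Continuous (stairMap (d := d) δ a) :=
  continuous_pi fun i => (continuous_stair ha ha1).comp (continuous_apply i)

theorem dist_stairMap_le {δ a : ℝ} (hδ : 0 ≤ δ) (ha : 0 < a) (v : Fin d → ℝ) :
    dist (stairMap δ a v) v ≤ δ :=
  (dist_pi_le_iff hδ).2 fun _ => (Real.dist_eq _ _).trans_le (abs_stair_sub_le hδ ha _)

/-- Flat boxes of height `2 ρ` over the values of `G` at the grid points, and slabs of width
`a δ` just below each grid hyperplane `v i = k δ`. -/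
def staircaseBoxes (G : (Fin d → ℝ) → ℝ) (δ a L M ρ : ℝ) (n : ℕ) :
    (Fin d → Icc (-(n : ℤ)) n) ⊕ (Fin d × Icc (-(n : ℤ)) n) →
      Set (EuclideanSpace ℝ (Fin (d + 1)))
  | .inl k =>
    prodBox (fun _ => -L) (fun _ => L)
      (G (fun i => δ * (k i : ℤ)) - ρ) (G (fun i => δ * (k i : ℤ)) + ρ)
  | .inr (i, k) =>
    prodBox (Function.update (fun _ => -L) i ((k : ℤ) * δ - a * δ))
      (Function.update (fun _ => L) i ((k : ℤ) * δ)) (-M) M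

theorem isBox_staircaseBoxes (G : (Fin d → ℝ) → ℝ) (δ a L M ρ : ℝ) (n : ℕ) :
    ∀ j, IsBox (staircaseBoxes G δ a L M ρ n j) := by
  rintro (_ | ⟨_, _⟩) <;> exact isBox_prodBox _ _ _ _

theorem volume_staircaseBoxes_le (G : (Fin d → ℝ) → ℝ) {δ a L M ρ : ℝ} (n : ℕ)
    (hδ : 0 ≤ δ) (ha : 0 ≤ a) (hL : 0 ≤ L) :
    ∀ j, volume (staircaseBoxes G δ a L M ρ n j) ≤
      ENNReal.ofReal (max ((2 * L) ^ d * (2 * ρ)) (a * δ * (2 * L) ^ (d - 1) * (2 * M))) := by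
  rintro (_ | ⟨_, _⟩)
  · rw [staircaseBoxes, volume_prodBox_cube hL]
    exact ENNReal.ofReal_le_ofReal ((le_of_eq (by ring)).trans (le_max_left _ _))
  · rw [staircaseBoxes, volume_prodBox_slab hL (mul_nonneg ha hδ)]
    exact ENNReal.ofReal_le_ofReal ((le_of_eq (by ring)).trans (le_max_right _ _))

theorem toLp_snoc_mem_staircaseBoxes (G : (Fin d → ℝ) → ℝ) {δ a L M ρ y : ℝ} {n : ℕ}
    {v : Fin d → ℝ} (hδ : 0 < δ) (ha : 0 ≤ a) (hn : L / δ + 1 ≤ n) (hv : ‖v‖ ≤ L)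
    (hy : |y - G (stairMap δ a v)| ≤ ρ) (hyM : |y| ≤ M) :
    WithLp.toLp 2 (Fin.snoc v y : Fin (d + 1) → ℝ) ∈
      ⋃ j, staircaseBoxes G δ a L M ρ n j := by
  have hvi : ∀ i, |v i| ≤ L := fun i => (norm_le_pi_norm v i).trans hv
  have hcube : ∀ i, v i ∈ Icc (-L) L := fun i => abs_le.1 (hvi i)
  have hgrid := fun i => floor_div_mem_Icc hδ (hvi i) hn
  by_cases hplateau : ∀ i, Int.fract (v i / δ) ≤ 1 - a
  · let k : Fin d → Icc (-(n : ℤ)) n := fun i =>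
      ⟨⌊v i / δ⌋, (hgrid i).1, by linarith [(hgrid i).2]⟩
    have hRv : stairMap δ a v = fun i => δ * (k i : ℤ) :=
      funext fun i => stair_eq_of_fract_le hδ.ne' ha (hplateau i)
    refine mem_iUnion.2 ⟨.inl k, toLp_snoc_mem_prodBox.2 ⟨hcube, ?_⟩⟩
    rw [hRv] at hy
    exact ⟨by linarith [(abs_le.1 hy).1], by linarith [(abs_le.1 hy).2]⟩
  · push Not at hplateau
    obtain ⟨i, hi⟩ := hplateau
    let k : Icc (-(n : ℤ)) n := ⟨⌊v i / δ⌋ + 1, by linarith [(hgrid i).1], (hgrid i).2⟩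
    refine mem_iUnion.2 ⟨.inr (i, k), toLp_snoc_mem_prodBox.2 ⟨fun j => ?_, abs_le.1 hyM⟩⟩
    rcases eq_or_ne j i with rfl | hj
    · simpa [k] using mem_Icc_of_one_sub_lt_fract hδ hi
    · simpa [Function.update_of_ne hj] using hcube j

end StaircaseApprox

theorem exists_staircase_approx {d : ℕ} (G : C(Fin d → ℝ, ℝ)) {L η : ℝ} (hL : 0 ≤ L)
    (hη : 0 < η) :
    ∃ N : ℕ, ∀ τ > 0, ∃ R : C(Fin d → ℝ, Fin d → ℝ),
      (∀ v, ‖v‖ ≤ L → dist (G (R v)) (G v) < η) ∧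
      ∃ B : Fin N → Set (EuclideanSpace ℝ (Fin (d + 1))),
        (∀ j, IsBox (B j)) ∧ (∀ j, volume (B j) ≤ ENNReal.ofReal τ) ∧
        ∃ ρ > 0, ∀ v, ‖v‖ ≤ L → ∀ y, |y - G (R v)| ≤ ρ →
          WithLp.toLp 2 (Fin.snoc v y : Fin (d + 1) → ℝ) ∈ ⋃ j, B j := by
  set D := Metric.closedBall (0 : Fin d → ℝ) (L + 1)
  have hD : IsCompact D := isCompact_closedBall _ _
  have hD_mem : ∀ {v : Fin d → ℝ}, ‖v‖ ≤ L + 1 → v ∈ D := mem_closedBall_zero_iff.2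
  obtain ⟨δ₀, hδ₀, hG⟩ := Metric.uniformContinuousOn_iff.1
    (hD.uniformContinuousOn_of_continuous G.continuous.continuousOn) η hη
  obtain ⟨M, hM⟩ := hD.exists_bound_of_continuousOn G.continuous.continuousOn
  have hM₀ : 0 ≤ M := (norm_nonneg _).trans (hM 0 (hD_mem (by rw [norm_zero]; linarith)))
  set δ := min (δ₀ / 2) 1
  have hδ : 0 < δ := lt_min (half_pos hδ₀) one_pos
  have hδδ₀ : δ < δ₀ := (min_le_left _ _).trans_lt (half_lt_self hδ₀)
  obtain ⟨n, hn⟩ := exists_nat_ge (L / δ + 1)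
  let ι := (Fin d → Icc (-(n : ℤ)) n) ⊕ (Fin d × Icc (-(n : ℤ)) n)
  let e := (Fintype.equivFin ι).symm
  refine ⟨Fintype.card ι, fun τ hτ => ?_⟩
  obtain ⟨ρ, hρ, hρ1, hρτ⟩ :=
    exists_pos_le_one_mul_le (C := (2 * L) ^ d * 2) (by positivity) hτ
  obtain ⟨a, ha, ha1, haτ⟩ :=
    exists_pos_le_one_mul_le (C := δ * (2 * L) ^ (d - 1) * (2 * (M + 1))) (by positivity) hτ
  let R : C(Fin d → ℝ, Fin d → ℝ) := ⟨stairMap δ a, continuous_stairMap ha ha1⟩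
  have hRv : ∀ v, dist (R v) v ≤ δ := dist_stairMap_le hδ.le ha
  have hRD : ∀ v : Fin d → ℝ, ‖v‖ ≤ L → R v ∈ D := fun v hv => hD_mem <| by
    have := norm_le_norm_add_norm_sub' (R v) v
    rw [← dist_eq_norm] at this
    linarith [hRv v, min_le_right (δ₀ / 2) 1]
  refine ⟨R, fun v hv => hG _ (hRD v hv) _ (hD_mem (by linarith)) ((hRv v).trans_lt hδδ₀),
    staircaseBoxes G δ a L (M + 1) ρ n ∘ e, fun j => isBox_staircaseBoxes _ _ _ _ _ _ _ (e j),
    fun j => (volume_staircaseBoxes_le _ n hδ.le ha.le hL (e j)).trans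
      (ENNReal.ofReal_le_ofReal (max_le (by linarith) (by linarith))),
    ρ, hρ, fun v hv y hy => ?_⟩
  have hyM : |y| ≤ M + 1 := by
    have := hM (R v) (hRD v hv)
    rw [Real.norm_eq_abs] at this
    linarith [abs_sub_abs_le_abs_sub y (G (R v))]
  rw [Function.comp_def, e.surjective.iUnion_comp]
  exact toLp_snoc_mem_staircaseBoxes G hδ ha.le hn hv hy hyM

section Graph

variable {d : ℕ}

def thickGraphCoverable (Ω : Set (EuclideanSpace ℝ (Fin d))) (K : Set Ω) (r : ℕ → ℝ) :
    Set C(Ω, ℝ) :=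
  {f | ∃ B : ℕ → Set (EuclideanSpace ℝ (Fin (d + 1))),
    (∀ n, IsBox (B n)) ∧ (∀ n, volume (B n) ≤ ENNReal.ofReal (r n)) ∧
    ∃ ρ > 0, ∀ x ∈ K, ∀ y, |y - f x| ≤ ρ →
      WithLp.toLp 2 (Fin.snoc (WithLp.ofLp (x : EuclideanSpace ℝ (Fin d))) y) ∈ ⋃ n, B n}

variable {Ω : Set (EuclideanSpace ℝ (Fin d))}

theorem isOpen_thickGraphCoverable {K : Set Ω} (hK : IsCompact K) (r : ℕ → ℝ) :
    IsOpen (thickGraphCoverable Ω K r) :=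
  isOpen_iff_mem_nhds.2 fun _ ⟨B, hB, hvol, hcov⟩ =>
    mem_of_superset ((isOpen_setOf_thickening_subset hK _).mem_nhds hcov)
      fun _ hg => ⟨B, hB, hvol, hg⟩

theorem dense_thickGraphCoverable {K : Set Ω} (hK : IsCompact K) {r : ℕ → ℝ}
    (hr : ∀ n, 0 < r n) : Dense (thickGraphCoverable Ω K r) := by
  intro f
  rw [mem_closure_iff_nhds_basis f.hasBasis_nhds_dist]
  rintro ⟨K', η⟩ ⟨hK', hη⟩
  let φ : C(Ω, Fin d → ℝ) :=
    ⟨fun x => WithLp.ofLp (x : EuclideanSpace ℝ (Fin d)), by fun_prop⟩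
  have hC := hK.union hK'
  obtain ⟨G, hG⟩ := hC.exists_continuousMap_extension φ.continuous
    (fun x _ y _ h => Subtype.ext (WithLp.ofLp_injective 2 h)) f
  obtain ⟨L, hL, hφL⟩ := (hC.image φ.continuous).isBounded.exists_pos_norm_le
  obtain ⟨N, hN⟩ := exists_staircase_approx G hL.le hη
  obtain ⟨τ, hτ, hτr⟩ : ∃ τ > 0, ∀ n : Fin N, τ ≤ r n := by
    have : ∀ᶠ τ in 𝓝[>] (0 : ℝ), 0 < τ ∧ ∀ n : Fin N, τ ≤ r n :=
      Eventually.and self_mem_nhdsWithin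
        (nhdsWithin_le_nhds (eventually_all.2 fun n => eventually_le_nhds (hr n)))
    exact this.exists
  obtain ⟨R, hRG, B, hB, hvol, ρ, hρ, hcov⟩ := hN τ hτ
  let B' : ℕ → Set (EuclideanSpace ℝ (Fin (d + 1))) := fun n =>
    if h : n < N then B ⟨n, h⟩ else prodBox 0 0 0 0
  refine ⟨G.comp (R.comp φ), ⟨B', fun n => ?_, fun n => ?_, ρ, hρ, fun x hx y hy => ?_⟩,
    fun x hx => ?_⟩
  · unfold B'; split_ifs
    exacts [hB _, isBox_prodBox _ _ _ _]
  · unfold B'; split_ifs with h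
    · exact (hvol _).trans (ENNReal.ofReal_le_ofReal (hτr ⟨n, h⟩))
    · simp [volume_prodBox fun _ => le_refl _]
  · obtain ⟨j, hj⟩ := mem_iUnion.1 (hcov _ (hφL _ ⟨x, Or.inl hx, rfl⟩) y hy)
    exact mem_iUnion.2 ⟨j, by simpa [B', φ] using hj⟩
  · rw [← hG x (Or.inr hx), dist_comm]
    exact hRG _ (hφL _ ⟨x, Or.inr hx, rfl⟩)

end Graph

theorem microscopic_graph_of_forall_mem_thickGraphCoverable {d : ℕ}
    {Ω : Set (EuclideanSpace ℝ (Fin d))} {f : C(Ω, ℝ)} {K : ℕ → Set Ω}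
    (hK : ⋃ m, K m = univ)
    (hf : ∀ j m : ℕ,
      f ∈ thickGraphCoverable Ω (K m) fun n => (1 / (j + 1 : ℝ)) ^ (Nat.pair m n + 1)) :
    Microscopic {y : EuclideanSpace ℝ (Fin (d + 1)) |
      ∃ (x : EuclideanSpace ℝ (Fin d)) (hx : x ∈ Ω),
        y = WithLp.toLp 2 (Fin.snoc (WithLp.ofLp x) (f ⟨x, hx⟩))} := by
  intro ε hε
  obtain ⟨j, hj⟩ := exists_nat_one_div_lt hε
  choose B hB hvol ρ hρ hcov using hf j
  refine ⟨fun k => B k.unpair.1 k.unpair.2, fun k => hB _ _, ?_, fun k => ?_⟩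
  · rintro _ ⟨x, hx, rfl⟩
    obtain ⟨m, hm⟩ := mem_iUnion.1 (hK.symm ▸ mem_univ (⟨x, hx⟩ : Ω))
    obtain ⟨n, hn⟩ := mem_iUnion.1 (hcov m _ hm (f ⟨x, hx⟩) (by simpa using (hρ m).le))
    exact mem_iUnion.2 ⟨Nat.pair m n, by simpa using hn⟩
  · refine (hvol _ _).trans (ENNReal.ofReal_le_ofReal ?_)
    dsimp only
    rw [Nat.pair_unpair]
    exact pow_le_pow_left₀ (by positivity) hj.le _

theorem stmt19_general
    (d : ℕ) (Ω : Set (EuclideanSpace ℝ (Fin d)))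
    (hΩ : LocallyCompactSpace Ω) :
    ∀ᶠ f : C(↥Ω, ℝ) in residual C(↥Ω, ℝ),
      Microscopic {y : EuclideanSpace ℝ (Fin (d + 1)) |
        ∃ (x : EuclideanSpace ℝ (Fin d)) (hx : x ∈ Ω), y = WithLp.toLp 2 (Fin.snoc (WithLp.ofLp x) (f ⟨x, hx⟩))} := by
  have : SigmaCompactSpace Ω := by infer_instance
  let r : ℕ → ℕ → ℕ → ℝ := fun j m n => (1 / (j + 1 : ℝ)) ^ (Nat.pair m n + 1)
  have hres : (⋂ p : ℕ × ℕ, thickGraphCoverable Ω (compactCovering Ω p.2) (r p.1 p.2))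
      ∈ residual C(Ω, ℝ) :=
    countable_iInter_mem.2 fun p =>
      residual_of_dense_open (isOpen_thickGraphCoverable (isCompact_compactCovering Ω _) _)
        (dense_thickGraphCoverable (isCompact_compactCovering Ω _) fun n => by positivity)
  filter_upwards [hres] with f hf
  exact microscopic_graph_of_forall_mem_thickGraphCoverable (iUnion_compactCovering Ω)
    fun j m => mem_iInter.1 hf (j, m)

theorem stmt19
    (d : ℕ) (hd : 0 < d) (Ω : Set (EuclideanSpace ℝ (Fin d)))
    (hΩ : LocallyCompactSpace Ω) :
    ∀ᶠ f : C(↥Ω, ℝ) in residual C(↥Ω, ℝ),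
      Microscopic {y : EuclideanSpace ℝ (Fin (d + 1)) |
        ∃ (x : EuclideanSpace ℝ (Fin d)) (hx : x ∈ Ω), y = WithLp.toLp 2 (Fin.snoc (WithLp.ofLp x) (f ⟨x, hx⟩))} :=
  stmt19_general d Ω hΩ
end
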